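/- arXiv:1301.7606 — 2 statements merged into one kernel-verified Lean document; each statement's English description precedes it below -/
import Mathlib

section
/- Let r, s, μ be real numbers with 0 < s < r and 0 < μ ≤ √(2·(r/s − 1)). Then (1 + √2·μ − μ²/2)·s ≤ √2·r. -/
open Real

/-- Lemma 5.1(ii) computation: for 0 < μ ≤ λ(s,r) = √(2(r/s − 1)),
    (1 + √2 μ − μ²/2) s ≤ √2 r. -/
theorem exponent_bound (r s μ : ℝ) (hs : 0 < s) (hsr : s < r) (hμ : 0 < μ)
    (hmul : μ ≤ Real.sqrt (2 * (r / s - 1))) :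
    (1 + Real.sqrt 2 * μ - μ ^ 2 / 2) * s ≤ Real.sqrt 2 * r := by
  set a := Real.sqrt 2 with ha
  have ha2 : a ^ 2 = 2 := Real.sq_sqrt (by norm_num)
  have ha0 : 1 ≤ a := by nlinarith [Real.sqrt_nonneg 2]
  -- μ² ≤ 2(r/s − 1)
  have hX : (0:ℝ) ≤ 2 * (r / s - 1) := by
    have : 1 ≤ r / s := (one_le_div hs).mpr hsr.le
    linarith
  have hμ2 : μ ^ 2 ≤ 2 * (r / s - 1) := by
    have h2 : μ ^ 2 ≤ Real.sqrt (2 * (r / s - 1)) ^ 2 :=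
      pow_le_pow_left₀ hμ.le hmul 2
    rwa [Real.sq_sqrt hX] at h2
  have hμ2' : (1 + μ ^ 2 / 2) * s ≤ r := by
    have h := (le_div_iff₀ hs).mp (by linarith : 1 + μ ^ 2 / 2 ≤ r / s)
    linarith
  -- pointwise bound: 1 + aμ − μ²/2 ≤ a(1 + μ²/2)
  have hpt : 1 + a * μ - μ ^ 2 / 2 ≤ a * (1 + μ ^ 2 / 2) := by
    nlinarith [sq_nonneg ((a + 1) * μ - a)]
  calc (1 + a * μ - μ ^ 2 / 2) * s ≤ a * (1 + μ ^ 2 / 2) * s := by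
        nlinarith
    _ ≤ a * r := by nlinarith
end

section
/- Let ε and r be real numbers with 0 < ε < 1/2 and r > 1/ε, and for s ∈ (0, r) set λ(s) := √(2·(r/s − 1)). Then ∫_{εr}^{r−1} (1/(λ(s)·s))·exp( −λ(s)²·s/2 − s ) ds ≤ (π/√2)·exp(−r). -/
open Real MeasureTheory

/-! Since `λ(s)² s / 2 = r - s` and `λ(s) s = √2 √(s (r - s))`, the integrand is
`e^{-r} / (√2 √(s (r - s)))`. The function `s ↦ arcsin (2 s / r - 1)` is an antiderivative of
`1 / √(s (r - s))` on `(0, r)`, so the remaining integral is a difference of two values of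
`arcsin`, hence at most `π`. -/

namespace IntegralLambdaBound

variable {r s : ℝ}

lemma sqrt_two_mul_div_sub_one_sq_mul (hs : 0 < s) (hsr : s ≤ r) :
    √(2 * (r / s - 1)) ^ 2 * s = 2 * (r - s) := by
  have : 0 ≤ 2 * (r / s - 1) := by
    have : 1 ≤ r / s := (one_le_div hs).2 hsr
    linarith
  rw [sq_sqrt this]
  field_simp

lemma sqrt_two_mul_div_sub_one_mul (hs : 0 < s) (hsr : s ≤ r) :
    √(2 * (r / s - 1)) * s = √2 * √(s * (r - s)) := by
  rw [← sqrt_mul zero_le_two, ← sqrt_sq (by positivity : 0 ≤ √(2 * (r / s - 1)) * s),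
    mul_pow, pow_two s, ← mul_assoc, sqrt_two_mul_div_sub_one_sq_mul hs hsr]
  ring_nf

lemma integrand_eq_exp_neg_div_sqrt_two_mul (hs : 0 < s) (hsr : s ≤ r) :
    1 / (√(2 * (r / s - 1)) * s) * exp (-√(2 * (r / s - 1)) ^ 2 * s / 2 - s) =
      exp (-r) / √2 * (1 / √(s * (r - s))) := by
  have hexp : -√(2 * (r / s - 1)) ^ 2 * s / 2 - s = -r := by
    linear_combination (-1 / 2 : ℝ) * sqrt_two_mul_div_sub_one_sq_mul hs hsr
  rw [hexp, sqrt_two_mul_div_sub_one_mul hs hsr]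
  ring

lemma hasDerivAt_arcsin_two_mul_div_sub_one (hs : 0 < s) (hsr : s < r) :
    HasDerivAt (fun x ↦ arcsin (2 * x / r - 1)) (1 / √(s * (r - s))) s := by
  have hr : 0 < r := hs.trans hsr
  have hinner : HasDerivAt (fun x : ℝ ↦ 2 * x / r - 1) (2 / r) s := by
    simpa using (((hasDerivAt_id s).const_mul 2).div_const r).sub_const 1
  have hlt : 2 * s / r - 1 < 1 := by
    rw [div_sub' hr.ne', div_lt_one hr]; linarith
  have hgt : -1 < 2 * s / r - 1 := by
    rw [div_sub' hr.ne', lt_div_iff₀ hr]; linarith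
  have hsqrt : √(1 - (2 * s / r - 1) ^ 2) = 2 / r * √(s * (r - s)) := by
    have : 1 - (2 * s / r - 1) ^ 2 = (2 / r) ^ 2 * (s * (r - s)) := by field_simp; ring
    rw [this, sqrt_mul (sq_nonneg _), sqrt_sq (by positivity)]
  refine ((hasDerivAt_arcsin hgt.ne' hlt.ne).comp s hinner).congr_deriv ?_
  have : 0 < √(s * (r - s)) := sqrt_pos.2 (mul_pos hs (by linarith))
  rw [hsqrt]
  field_simp

lemma integral_one_div_sqrt_mul_sub {a b : ℝ} (ha : a ∈ Set.Ioo 0 r) (hb : b ∈ Set.Ioo 0 r) :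
    ∫ s in a..b, 1 / √(s * (r - s)) = arcsin (2 * b / r - 1) - arcsin (2 * a / r - 1) := by
  have hsub : Set.uIcc a b ⊆ Set.Ioo 0 r := Set.OrdConnected.uIcc_subset inferInstance ha hb
  refine intervalIntegral.integral_eq_sub_of_hasDerivAt
    (fun s hs ↦ hasDerivAt_arcsin_two_mul_div_sub_one (hsub hs).1 (hsub hs).2) ?_
  refine ContinuousOn.intervalIntegrable (continuousOn_const.div (by fun_prop) fun s hs ↦ ?_)
  exact (sqrt_pos.2 (mul_pos (hsub hs).1 (sub_pos.2 (hsub hs).2))).ne'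

lemma integral_one_div_sqrt_mul_sub_le_pi {a b : ℝ} (ha : a ∈ Set.Ioo 0 r)
    (hb : b ∈ Set.Ioo 0 r) : ∫ s in a..b, 1 / √(s * (r - s)) ≤ π := by
  rw [integral_one_div_sqrt_mul_sub ha hb]
  linarith [arcsin_le_pi_div_two (2 * b / r - 1), neg_pi_div_two_le_arcsin (2 * a / r - 1)]

end IntegralLambdaBound

open IntegralLambdaBound in
/-- Analytic core of Lemma 5.1(i): with λ(s) = √(2(r/s − 1)),
    ∫_{εr}^{r−1} (1/(λ(s) s)) exp(−λ(s)² s/2 − s) ds ≤ (π/√2) e^{−r}. -/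
theorem integral_lambda_bound (ε r : ℝ) (hε0 : 0 < ε) (hε : ε < 1 / 2) (hr : 1 / ε < r) :
    ∫ s in (ε * r)..(r - 1),
        (1 / (Real.sqrt (2 * (r / s - 1)) * s)) *
          Real.exp (-(Real.sqrt (2 * (r / s - 1))) ^ 2 * s / 2 - s)
      ≤ Real.pi / Real.sqrt 2 * Real.exp (-r) := by
  have hr1 : 1 < r := by
    have : 2 < 1 / ε := by rw [lt_div_iff₀ hε0]; linarith
    linarith
  have ha : ε * r ∈ Set.Ioo 0 r := ⟨by positivity, by nlinarith⟩
  have hb : r - 1 ∈ Set.Ioo 0 r := ⟨by linarith, by linarith⟩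
  have hsub : Set.uIcc (ε * r) (r - 1) ⊆ Set.Ioo 0 r :=
    Set.OrdConnected.uIcc_subset inferInstance ha hb
  rw [intervalIntegral.integral_congr fun s hs ↦
      integrand_eq_exp_neg_div_sqrt_two_mul (hsub hs).1 (hsub hs).2.le,
    intervalIntegral.integral_const_mul]
  calc exp (-r) / √2 * ∫ s in (ε * r)..(r - 1), 1 / √(s * (r - s))
      ≤ exp (-r) / √2 * π := by
        gcongr
        exact integral_one_div_sqrt_mul_sub_le_pi ha hb
    _ = π / √2 * exp (-r) := by ring
end
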